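/- Let γ: (-ε, L+ε) → ℝ² be a C² curve parametrized by arc length (so ‖γ'(t)‖ = 1 for all t), and suppose there is C₃ > 0 with ‖γ(t*) - γ(t)‖ ≥ C₃|t* - t| for all t*, t ∈ [0, L]. Then for every fixed integer M ≥ 1 there exists a constant C such that for all n large and all 0 ≤ k1 ≤ k2 ≤ M and 1 ≤ i ≤ n - k2, |d_{i+k1,i+k2} - (d_{i,i+k2} - d_{i,i+k1})| ≤ C n^{-3}, where t_i = φ(L(i-1)/(n-1)) for a C² function φ with φ(0)=0, φ(L)=L, min φ' > 0, and d_{j,l} = ‖γ(t_j) - γ(t_l)‖. -/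

import Mathlib

/-- The design points `t_i = φ(L(i-1)/(n-1))` on `[0, L]`. -/
noncomputable def designPt (φ : ℝ → ℝ) (L : ℝ) (n j : ℕ) : ℝ :=
  φ (L * ((j : ℝ) - 1) / ((n : ℝ) - 1))

/-!
On `[0, L]` the velocity of the unit-speed curve `γ` is `K`-Lipschitz, so comparing `γ'` with its
value at the left end of a parameter interval of length `h` shows that the chord falls short of the
arc length `h` by at most `K² h³ / 6`. Arc length is additive, so the triangle excess of three
ordered parameters `a ≤ b ≤ c` is `O((c - a)³)`. Since `φ` is increasing and Lipschitz on `[0, L]`,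
the design points `t_i ≤ t_{i+k₁} ≤ t_{i+k₂}` are ordered and `t_{i+k₂} - t_i = O(M / n)`.
-/

open Set RealInnerProductSpace

open scoped NNReal

section UnitSpeed

variable {E : Type*} [NormedAddCommGroup E] [InnerProductSpace ℝ E]
  {γ γ' : ℝ → E} {a b c : ℝ} {K : ℝ≥0}

theorem sub_sub_cube_le_norm_image_sub
    (hγ : ∀ u ∈ Icc a b, HasDerivWithinAt γ (γ' u) (Icc a b) u)
    (hunit : ∀ u ∈ Icc a b, ‖γ' u‖ = 1) (hlip : LipschitzOnWith K γ' (Icc a b)) (hab : a ≤ b) :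
    (b - a) - K ^ 2 * (b - a) ^ 3 / 6 ≤ ‖γ b - γ a‖ := by
  set v := γ' a
  have ha : a ∈ Icc a b := left_mem_Icc.mpr hab
  have hb : b ∈ Icc a b := right_mem_Icc.mpr hab
  have hv : ‖v‖ = 1 := hunit a ha
  -- `γ'` stays within `K (u - a)` of `v`, so `⟪γ' u, v⟫ ≥ 1 - K² (u - a)² / 2` and `g` is monotone.
  set g : ℝ → ℝ := fun t ↦ ⟪γ t - γ a, v⟫ - ((t - a) - K ^ 2 * (t - a) ^ 3 / 6)
  have hg : ∀ u ∈ Icc a b, HasDerivWithinAt g (⟪γ' u, v⟫ - (1 - K ^ 2 * (u - a) ^ 2 / 2))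
      (Icc a b) u := by
    intro u hu
    have hpoly : HasDerivAt (fun t : ℝ ↦ (t - a) - K ^ 2 * (t - a) ^ 3 / 6)
        (1 - K ^ 2 * (u - a) ^ 2 / 2) u := by
      have hlin := (hasDerivAt_id' u).sub_const a
      exact (hlin.sub (((hlin.pow 3).const_mul (K ^ 2 : ℝ)).div_const 6)).congr_deriv (by ring)
    have hinner : HasDerivWithinAt (fun t ↦ ⟪γ t - γ a, v⟫) ⟪γ' u, v⟫ (Icc a b) u := by
      simpa using ((hγ u hu).sub_const (γ a)).inner ℝ (hasDerivWithinAt_const u _ v)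
    exact hinner.sub hpoly.hasDerivWithinAt
  have hg'_nonneg : ∀ u ∈ Icc a b, 0 ≤ ⟪γ' u, v⟫ - (1 - K ^ 2 * (u - a) ^ 2 / 2) := by
    intro u hu
    have hclose : ‖γ' u - v‖ ≤ K * (u - a) := by
      simpa [dist_eq_norm, abs_of_nonneg (sub_nonneg.mpr hu.1)] using
        hlip.dist_le_mul u hu a ha
    have hsq : ‖γ' u - v‖ ^ 2 = 2 - 2 * ⟪γ' u, v⟫ := by
      rw [norm_sub_sq_real, hunit u hu, hv]; ring
    nlinarith [pow_le_pow_left₀ (norm_nonneg _) hclose 2]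
  have hmono : MonotoneOn g (Icc a b) := by
    refine monotoneOn_of_hasDerivWithinAt_nonneg (convex_Icc a b)
      (f' := fun u ↦ ⟪γ' u, v⟫ - (1 - K ^ 2 * (u - a) ^ 2 / 2))
      (fun u hu ↦ (hg u hu).continuousWithinAt) (fun u hu ↦ ?_) (fun u hu ↦ ?_) <;>
      simp only [interior_Icc] at hu ⊢
    · exact (hg u (Ioo_subset_Icc_self hu)).mono Ioo_subset_Icc_self
    · exact hg'_nonneg u (Ioo_subset_Icc_self hu)
  have hgab : g a ≤ g b := hmono ha hb hab
  calc (b - a) - K ^ 2 * (b - a) ^ 3 / 6 ≤ ⟪γ b - γ a, v⟫ := by simpa [g] using hgab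
    _ ≤ ‖γ b - γ a‖ * ‖v‖ := real_inner_le_norm _ _
    _ = ‖γ b - γ a‖ := by rw [hv, mul_one]

theorem abs_triangle_excess_le_of_unit_deriv
    (hγ : ∀ u ∈ Icc a c, HasDerivWithinAt γ (γ' u) (Icc a c) u)
    (hunit : ∀ u ∈ Icc a c, ‖γ' u‖ = 1) (hlip : LipschitzOnWith K γ' (Icc a c))
    (hab : a ≤ b) (hbc : b ≤ c) :
    |‖γ b - γ c‖ - (‖γ a - γ c‖ - ‖γ a - γ b‖)| ≤ K ^ 2 * (c - a) ^ 3 / 3 := by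
  have hchord : ∀ x y, a ≤ x → x ≤ y → y ≤ c →
      (y - x) - K ^ 2 * (c - a) ^ 3 / 6 ≤ ‖γ x - γ y‖ ∧ ‖γ x - γ y‖ ≤ y - x := by
    intro x y hax hxy hyc
    have hsub : Icc x y ⊆ Icc a c := Icc_subset_Icc hax hyc
    have hγxy : ∀ u ∈ Icc x y, HasDerivWithinAt γ (γ' u) (Icc x y) u :=
      fun u hu ↦ (hγ u (hsub hu)).mono hsub
    have hcube : (y - x) ^ 3 ≤ (c - a) ^ 3 := by gcongr
    rw [norm_sub_rev]
    constructor
    · calc (y - x) - K ^ 2 * (c - a) ^ 3 / 6 ≤ (y - x) - K ^ 2 * (y - x) ^ 3 / 6 := by gcongr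
        _ ≤ ‖γ y - γ x‖ := sub_sub_cube_le_norm_image_sub hγxy (fun u hu ↦ hunit u (hsub hu))
            (hlip.mono hsub) hxy
    · simpa using norm_image_sub_le_of_norm_deriv_le_segment' hγxy
        (fun u hu ↦ (hunit u (hsub (Ico_subset_Icc_self hu))).le) y (right_mem_Icc.mpr hxy)
  obtain ⟨hab₁, hab₂⟩ := hchord a b le_rfl hab hbc
  obtain ⟨hbc₁, hbc₂⟩ := hchord b c hab hbc le_rfl
  obtain ⟨hac₁, hac₂⟩ := hchord a c le_rfl (hab.trans hbc) le_rfl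
  rw [abs_le]
  constructor <;> linarith

end UnitSpeed

theorem ContDiffOn.exists_lipschitzOnWith_deriv {F : Type*} [NormedAddCommGroup F]
    [NormedSpace ℝ F] {f : ℝ → F} {U s : Set ℝ} (hf : ContDiffOn ℝ 2 f U) (hU : IsOpen U)
    (hs : s ⊆ U) (hs_convex : Convex ℝ s) (hs_compact : IsCompact s) :
    ∃ K, LipschitzOnWith K (deriv f) s :=
  ((hf.deriv_of_isOpen hU (by norm_num)).mono hs).exists_lipschitzOnWith one_ne_zero hs_convex
    hs_compact

noncomputable def designNode (L : ℝ) (n j : ℕ) : ℝ := L * ((j : ℝ) - 1) / ((n : ℝ) - 1)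

section DesignPoints

variable {φ : ℝ → ℝ} {L : ℝ} {n j k : ℕ}

theorem designPt_eq (φ : ℝ → ℝ) (L : ℝ) (n j : ℕ) : designPt φ L n j = φ (designNode L n j) :=
  rfl

theorem designNode_mem_Icc (hL : 0 ≤ L) (hj : 1 ≤ j) (hjn : j ≤ n) :
    designNode L n j ∈ Icc 0 L := by
  have hj' : (1 : ℝ) ≤ j := by exact_mod_cast hj
  have hjn' : (j : ℝ) ≤ n := by exact_mod_cast hjn
  rcases (show (0 : ℝ) ≤ n - 1 by linarith).lt_or_eq with hden | hden
  · refine ⟨by unfold designNode; positivity, ?_⟩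
    rw [designNode, div_le_iff₀ hden]
    nlinarith
  · simp [designNode, ← hden, hL]

theorem designNode_add_sub (L : ℝ) (n j k : ℕ) :
    designNode L n (j + k) - designNode L n j = L * k / ((n : ℝ) - 1) := by
  rw [designNode, designNode, ← sub_div]
  push_cast
  ring

theorem designPt_le_designPt {l : ℕ} (hφ : MonotoneOn φ (Icc 0 L)) (hL : 0 ≤ L) (hj : 1 ≤ j)
    (hjl : j ≤ l) (hln : l ≤ n) : designPt φ L n j ≤ designPt φ L n l := by
  refine hφ (designNode_mem_Icc hL hj (hjl.trans hln)) (designNode_mem_Icc hL (hj.trans hjl) hln) ?_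
  have hn : (1 : ℝ) ≤ n := by exact_mod_cast hj.trans (hjl.trans hln)
  have : (0 : ℝ) ≤ n - 1 := by linarith
  show designNode L n j ≤ designNode L n l
  unfold designNode
  gcongr

theorem designPt_add_sub_le {Kφ : ℝ≥0} (hφ : LipschitzOnWith Kφ φ (Icc 0 L)) (hL : 0 ≤ L)
    (hn : 2 ≤ n) (hj : 1 ≤ j) (hjk : j + k ≤ n) :
    designPt φ L n (j + k) - designPt φ L n j ≤ 2 * Kφ * L * k / n := by
  have hn' : (2 : ℝ) ≤ n := by exact_mod_cast hn
  have hden : (0 : ℝ) < n - 1 := by linarith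
  have hlip : |designPt φ L n (j + k) - designPt φ L n j| ≤
      Kφ * |designNode L n (j + k) - designNode L n j| := by
    simpa only [Real.dist_eq, designPt_eq] using
      hφ.dist_le_mul _ (designNode_mem_Icc hL (by omega) hjk) _
        (designNode_mem_Icc hL hj (by omega))
  rw [designNode_add_sub, abs_of_nonneg (div_nonneg (by positivity) hden.le)] at hlip
  have hinv : 1 / ((n : ℝ) - 1) ≤ 2 / n := by
    rw [div_le_div_iff₀ hden (by linarith)]
    linarith
  calc designPt φ L n (j + k) - designPt φ L n j ≤ Kφ * (L * k * (1 / ((n : ℝ) - 1))) := by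
        rw [← mul_div_assoc, mul_one]; exact (le_abs_self _).trans hlip
    _ ≤ Kφ * (L * k * (2 / n)) := by gcongr
    _ = 2 * Kφ * L * k / n := by ring

end DesignPoints

theorem stmt_7_general (ε L : ℝ) (hε : 0 < ε) (hL : 0 < L)
    (γ : ℝ → EuclideanSpace ℝ (Fin 2))
    (hγ : ContDiffOn ℝ 2 γ (Set.Ioo (-ε) (L + ε)))
    (hunit : ∀ t ∈ Set.Ioo (-ε) (L + ε), ‖deriv γ t‖ = 1)
    (φ : ℝ → ℝ) (hφ : ContDiff ℝ 2 φ) (hφ0 : φ 0 = 0) (hφL : φ L = L)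
    (hφ' : ∀ s ∈ Set.Icc (0 : ℝ) L, 0 < deriv φ s)
    (M : ℕ) :
    ∃ C : ℝ, ∃ N : ℕ, ∀ n : ℕ, N ≤ n → ∀ k1 k2 i : ℕ,
      k1 ≤ k2 → k2 ≤ M → 1 ≤ i → i ≤ n - k2 →
      |‖γ (designPt φ L n (i + k1)) - γ (designPt φ L n (i + k2))‖ -
          (‖γ (designPt φ L n i) - γ (designPt φ L n (i + k2))‖ -
            ‖γ (designPt φ L n i) - γ (designPt φ L n (i + k1))‖)| ≤
        C / (n : ℝ) ^ 3 := by
  have hIcc : Icc 0 L ⊆ Ioo (-ε) (L + ε) := Icc_subset_Ioo (by linarith) (by linarith)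
  have hderiv : ∀ u ∈ Icc 0 L, HasDerivAt γ (deriv γ u) u := fun u hu ↦
    ((hγ.differentiableOn (by norm_num) u (hIcc hu)).differentiableAt
      (isOpen_Ioo.mem_nhds (hIcc hu))).hasDerivAt
  obtain ⟨K, hK⟩ := hγ.exists_lipschitzOnWith_deriv isOpen_Ioo hIcc (convex_Icc 0 L) isCompact_Icc
  obtain ⟨Kφ, hKφ⟩ := hφ.contDiffOn.exists_lipschitzOnWith two_ne_zero (convex_Icc 0 L)
    isCompact_Icc
  have hmono : MonotoneOn φ (Icc 0 L) :=
    (strictMonoOn_of_deriv_pos (convex_Icc 0 L) hφ.continuous.continuousOn fun x hx ↦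
      hφ' x (interior_subset hx)).monotoneOn
  have hmaps : MapsTo φ (Icc 0 L) (Icc 0 L) := by
    simpa only [hφ0, hφL] using hmono.mapsTo_Icc
  refine ⟨K ^ 2 * (2 * Kφ * L * M) ^ 3 / 3, 2, fun n hn k1 k2 i hk12 hk2 hi hin ↦ ?_⟩
  have hik2 : i + k2 ≤ n := by omega
  set a := designPt φ L n i
  set c := designPt φ L n (i + k2)
  have hac : a ≤ c := designPt_le_designPt hmono hL.le hi (by omega) hik2
  have hsub : Icc a c ⊆ Icc 0 L :=
    Icc_subset_Icc (hmaps (designNode_mem_Icc hL.le hi (by omega))).1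
      (hmaps (designNode_mem_Icc hL.le (by omega) hik2)).2
  have hgap : c - a ≤ 2 * Kφ * L * M / n := by
    calc c - a ≤ 2 * Kφ * L * k2 / n := designPt_add_sub_le hKφ hL.le hn hi hik2
      _ ≤ 2 * Kφ * L * M / n := by gcongr
  calc _ ≤ K ^ 2 * (c - a) ^ 3 / 3 :=
        abs_triangle_excess_le_of_unit_deriv
          (fun u hu ↦ (hderiv u (hsub hu)).hasDerivWithinAt)
          (fun u hu ↦ hunit u (hIcc (hsub hu))) (hK.mono hsub)
          (designPt_le_designPt hmono hL.le hi (by omega) (by omega))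
          (designPt_le_designPt hmono hL.le (by omega) (by omega) hik2)
    _ ≤ K ^ 2 * (2 * Kφ * L * M / n) ^ 3 / 3 := by gcongr
    _ = K ^ 2 * (2 * Kφ * L * M) ^ 3 / 3 / (n : ℝ) ^ 3 := by ring

theorem stmt_7 (ε L : ℝ) (hε : 0 < ε) (hL : 0 < L)
    (γ : ℝ → EuclideanSpace ℝ (Fin 2))
    (hγ : ContDiffOn ℝ 2 γ (Set.Ioo (-ε) (L + ε)))
    (hunit : ∀ t ∈ Set.Ioo (-ε) (L + ε), ‖deriv γ t‖ = 1)
    (C₃ : ℝ) (hC₃ : 0 < C₃)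
    (hlow : ∀ t ∈ Set.Icc (0 : ℝ) L, ∀ t' ∈ Set.Icc (0 : ℝ) L,
      C₃ * |t' - t| ≤ ‖γ t' - γ t‖)
    (φ : ℝ → ℝ) (hφ : ContDiff ℝ 2 φ) (hφ0 : φ 0 = 0) (hφL : φ L = L)
    (hφ' : ∀ s ∈ Set.Icc (0 : ℝ) L, 0 < deriv φ s)
    (M : ℕ) (hM : 1 ≤ M) :
    ∃ C : ℝ, ∃ N : ℕ, ∀ n : ℕ, N ≤ n → ∀ k1 k2 i : ℕ,
      k1 ≤ k2 → k2 ≤ M → 1 ≤ i → i ≤ n - k2 →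
      |‖γ (designPt φ L n (i + k1)) - γ (designPt φ L n (i + k2))‖ -
          (‖γ (designPt φ L n i) - γ (designPt φ L n (i + k2))‖ -
            ‖γ (designPt φ L n i) - γ (designPt φ L n (i + k1))‖)| ≤
        C / (n : ℝ) ^ 3 :=
  stmt_7_general ε L hε hL γ hγ hunit φ hφ hφ0 hφL hφ' M
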